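/- arXiv:2203.12822 — 6 statements merged into one kernel-verified Lean document; each statement's English description precedes it below -/
import Mathlib

section
/- Let (Y, μ) be a set equipped with a finite measure, let q > 1, let G be a real normed space, and let T : G → L^q(Y, μ) be a bounded injective linear map such that every bounded sequence (u_k) in G contains a subsequence (u_{k_j}) for which the functions T u_{k_j} converge μ-almost everywhere on Y. Then for every s with 1 ≤ s < q, the map u ↦ T u, regarded as a map from G into L^s(Y, μ) (well-defined since μ is finite, so L^q(Y,μ) ⊆ L^s(Y,μ)), is compact, i.e., it maps bounded subsets of G to relatively compact subsets of L^s(Y, μ). -/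
open MeasureTheory Filter Bornology Topology
open scoped ENNReal NNReal

/-! Take a sequence in the image of a bounded set and a subsequence along which the images
converge a.e. Hölder's inequality on a set `E` bounds the `L^s` norm of the restriction to `E`
by the `L^q` norm times `μ(E)^(1/s - 1/q)`, so a family bounded in `L^q` is uniformly
integrable in `L^s` when `s < q`. On a finite measure space, Vitali's convergence theorem then
upgrades the a.e. convergence to convergence in `L^s`. -/

theorem isCompact_closure_of_forall_exists_tendsto_subseq {X : Type*} [PseudoMetricSpace X]
    {S : Set X}
    (hS : ∀ x : ℕ → X, (∀ n, x n ∈ S) →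
      ∃ a, ∃ φ : ℕ → ℕ, StrictMono φ ∧ Tendsto (x ∘ φ) atTop (𝓝 a)) :
    IsCompact (closure S) := by
  refine IsSeqCompact.isCompact fun x hx => ?_
  have happrox : ∀ n, ∃ y ∈ S, dist (x n) y < 1 / (n + 1) := fun n =>
    Metric.mem_closure_iff.1 (hx n) _ Nat.one_div_pos_of_nat
  choose y hyS hxy using happrox
  obtain ⟨a, φ, hφ, hya⟩ := hS y hyS
  have hdist : Tendsto (fun n => dist (x (φ n)) (y (φ n))) atTop (𝓝 0) :=
    squeeze_zero (fun _ => dist_nonneg) (fun n => (hxy (φ n)).le)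
      (tendsto_one_div_add_atTop_nhds_zero_nat.comp hφ.tendsto_atTop)
  have hxa : Tendsto (x ∘ φ) atTop (𝓝 a) :=
    tendsto_of_tendsto_of_dist hya (by simpa [dist_comm] using hdist)
  exact ⟨a, mem_closure_of_tendsto hya (Eventually.of_forall fun n => hyS (φ n)), φ, hφ, hxa⟩

section
variable {α β ι : Type*} [MeasurableSpace α] {μ : Measure α} [NormedAddCommGroup β]
  {p q : ℝ≥0∞}

theorem eLpNorm_indicator_le_eLpNorm_mul_rpow_measure (hpq : p ≤ q) {f : α → β}
    (hf : AEStronglyMeasurable f μ) {s : Set α} (hs : MeasurableSet s) :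
    eLpNorm (s.indicator f) p μ ≤ eLpNorm f q μ * μ s ^ (1 / p.toReal - 1 / q.toReal) := by
  rw [eLpNorm_indicator_eq_eLpNorm_restrict hs]
  calc eLpNorm f p (μ.restrict s)
      ≤ eLpNorm f q (μ.restrict s) * μ.restrict s Set.univ ^ (1 / p.toReal - 1 / q.toReal) :=
        eLpNorm_le_eLpNorm_mul_rpow_measure_univ hpq hf.restrict
    _ ≤ eLpNorm f q μ * μ s ^ (1 / p.toReal - 1 / q.toReal) := by
        rw [Measure.restrict_apply_univ]
        gcongr
        exact Measure.restrict_le_self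

theorem unifIntegrable_of_eLpNorm_le_of_lt (hp : p ≠ 0) (hpq : p < q) {f : ι → α → β}
    (hf : ∀ i, AEStronglyMeasurable (f i) μ) {C : ℝ≥0} (hfC : ∀ i, eLpNorm (f i) q μ ≤ C) :
    UnifIntegrable f p μ := by
  set e : ℝ := 1 / p.toReal - 1 / q.toReal
  have he : 0 < e := by
    rcases eq_or_ne q ∞ with rfl | hq
    · simpa [e] using ENNReal.toReal_pos hp hpq.ne_top
    · simpa [e] using inv_strictAnti₀ (ENNReal.toReal_pos hp hpq.ne_top)
        ((ENNReal.toReal_lt_toReal hpq.ne_top hq).2 hpq)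
  intro ε hε
  refine ⟨(ε / (C + 1)) ^ e⁻¹, by positivity, fun i s hs hμs => ?_⟩
  calc eLpNorm (s.indicator (f i)) p μ
      ≤ eLpNorm (f i) q μ * μ s ^ e :=
        eLpNorm_indicator_le_eLpNorm_mul_rpow_measure hpq.le (hf i) hs
    _ ≤ C * ENNReal.ofReal ((ε / (C + 1)) ^ e⁻¹) ^ e := by
        gcongr
        exact hfC i
    _ = ENNReal.ofReal (C * (ε / (C + 1))) := by
        rw [ENNReal.ofReal_rpow_of_nonneg (by positivity) he.le,
          Real.rpow_inv_rpow (by positivity) he.ne',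
          ENNReal.ofReal_mul C.coe_nonneg, ENNReal.ofReal_coe_nnreal]
    _ ≤ ENNReal.ofReal ε := by
        gcongr
        rw [mul_div_left_comm]
        exact mul_le_of_le_one_right hε.le ((div_le_one (by positivity)).2 (by linarith))

theorem memLp_of_tendsto_ae_of_eLpNorm_le {f : ℕ → α → β} {g : α → β}
    (hf : ∀ n, AEStronglyMeasurable (f n) μ) {C : ℝ≥0} (hfC : ∀ n, eLpNorm (f n) p μ ≤ C)
    (hfg : ∀ᵐ x ∂μ, Tendsto (fun n => f n x) atTop (𝓝 (g x))) : MemLp g p μ := by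
  refine ⟨aestronglyMeasurable_of_tendsto_ae atTop hf hfg,
    (Lp.eLpNorm_lim_le_liminf_eLpNorm hf g hfg).trans_lt ?_⟩
  calc atTop.liminf (fun n => eLpNorm (f n) p μ) ≤ C :=
        liminf_le_of_le (by isBoundedDefault) fun _ hb =>
          hb.exists.elim fun n hn => hn.trans (hfC n)
    _ < ∞ := ENNReal.coe_lt_top

theorem tendsto_eLpNorm_sub_of_tendsto_ae_of_eLpNorm_le_of_lt [IsFiniteMeasure μ]
    (hp : 1 ≤ p) (hpq : p < q) {f : ℕ → α → β} {g : α → β}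
    (hf : ∀ n, AEStronglyMeasurable (f n) μ) {C : ℝ≥0} (hfC : ∀ n, eLpNorm (f n) q μ ≤ C)
    (hfg : ∀ᵐ x ∂μ, Tendsto (fun n => f n x) atTop (𝓝 (g x))) :
    MemLp g p μ ∧ Tendsto (fun n => eLpNorm (f n - g) p μ) atTop (𝓝 0) := by
  have hg : MemLp g p μ := (memLp_of_tendsto_ae_of_eLpNorm_le hf hfC hfg).mono_exponent hpq.le
  exact ⟨hg, tendsto_Lp_finite_of_tendsto_ae hp hpq.ne_top hf hg
    (unifIntegrable_of_eLpNorm_le_of_lt (zero_lt_one.trans_le hp).ne' hpq hf hfC) hfg⟩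

end

theorem stmt_0_general
    {Y : Type*} [MeasurableSpace Y] (μ : Measure Y) [IsFiniteMeasure μ]
    (q : ℝ) (hq : 1 < q) [Fact (1 ≤ ENNReal.ofReal q)]
    {G : Type*} [NormedAddCommGroup G] [NormedSpace ℝ G]
    (T : G →L[ℝ] Lp ℝ (ENNReal.ofReal q) μ)
    (hae : ∀ u : ℕ → G, IsBounded (Set.range u) →
      ∃ k : ℕ → ℕ, StrictMono k ∧ ∃ f : Y → ℝ,
        ∀ᵐ y ∂μ, Tendsto (fun j => (T (u (k j)) : Y → ℝ) y) atTop (nhds (f y)))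
    (s : ℝ) (hsq : s < q) [Fact (1 ≤ ENNReal.ofReal s)] :
    ∀ B : Set G, IsBounded B →
      IsCompact (closure ((fun u : G =>
        ((Lp.memLp (T u)).mono_exponent
          (ENNReal.ofReal_le_ofReal hsq.le)).toLp (T u : Y → ℝ)) '' B)) := by
  intro B hB
  refine isCompact_closure_of_forall_exists_tendsto_subseq fun x hx => ?_
  choose u huB hux using hx
  obtain ⟨k, hk, f, hf⟩ := hae u (hB.subset (Set.range_subset_iff.2 huB))
  obtain ⟨R, hR⟩ := isBounded_iff_forall_norm_le.1 hB
  have hTu : ∀ j, eLpNorm (T (u (k j)) : Y → ℝ) (ENNReal.ofReal q) μ ≤ ‖T‖₊ * R.toNNReal :=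
    fun j => by
      rw [← Lp.enorm_def]
      refine T.le_opENorm_of_le ?_
      rw [← ofReal_norm]
      exact ENNReal.ofReal_le_ofReal (hR _ (huB _))
  have hsq' : ENNReal.ofReal s < ENNReal.ofReal q :=
    (ENNReal.ofReal_lt_ofReal_iff (zero_lt_one.trans hq)).2 hsq
  obtain ⟨hf_s, hlim⟩ := tendsto_eLpNorm_sub_of_tendsto_ae_of_eLpNorm_le_of_lt Fact.out hsq'
    (fun j => Lp.aestronglyMeasurable _) hTu hf
  refine ⟨hf_s.toLp f, k, hk, ?_⟩
  rw [show x ∘ k = _ from funext fun j => (hux (k j)).symm]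
  exact (Lp.tendsto_Lp_iff_tendsto_eLpNorm'' _ _ f hf_s).2 hlim

/-- Abstract Rellich–Kondrachov compactness theorem (Proposition 2.6 of the paper):
if `T : G → L^q(Y, μ)` is a bounded injective linear map on a finite measure space with
`q > 1`, such that every bounded sequence in `G` has a subsequence whose images converge
`μ`-a.e., then for every `1 ≤ s < q` the induced map `G → L^s(Y, μ)` is compact. -/
theorem stmt_0
    {Y : Type*} [MeasurableSpace Y] (μ : Measure Y) [IsFiniteMeasure μ]
    (q : ℝ) (hq : 1 < q) [Fact (1 ≤ ENNReal.ofReal q)]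
    {G : Type*} [NormedAddCommGroup G] [NormedSpace ℝ G]
    (T : G →L[ℝ] Lp ℝ (ENNReal.ofReal q) μ)
    (hT_inj : Function.Injective T)
    (hae : ∀ u : ℕ → G, IsBounded (Set.range u) →
      ∃ k : ℕ → ℕ, StrictMono k ∧ ∃ f : Y → ℝ,
        ∀ᵐ y ∂μ, Tendsto (fun j => (T (u (k j)) : Y → ℝ) y) atTop (nhds (f y)))
    (s : ℝ) (hs1 : 1 ≤ s) (hsq : s < q) [Fact (1 ≤ ENNReal.ofReal s)] :
    ∀ B : Set G, IsBounded B →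
      IsCompact (closure ((fun u : G =>
        ((Lp.memLp (T u)).mono_exponent
          (ENNReal.ofReal_le_ofReal hsq.le)).toLp (T u : Y → ℝ)) '' B)) :=
  stmt_0_general μ q hq T hae s hsq
end

section
/- Let (Y, μ) be a finite measure space, let q > 2, let G be a real normed space, and let T : G → L^q(Y, μ) be a bounded injective linear map such that the induced map G → L^2(Y, μ) (the composition of T with the continuous inclusion L^q(Y,μ) ↪ L^2(Y,μ), which exists since μ is finite) is a compact operator. Then for every s with 1 ≤ s < q, the induced map G → L^s(Y, μ) is compact, i.e., it maps bounded subsets of G to relatively compact subsets of L^s(Y, μ). -/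
open MeasureTheory Bornology
open scoped ENNReal

/-!
If `2 < r < q`, Hölder's inequality applied to `|f| = |f|^θ |f|^(1-θ)` gives the interpolation
bound `‖f‖_r ≤ ‖f‖_2^θ ‖f‖_q^(1-θ)`, and on a finite measure space `‖f‖_s ≤ C ‖f‖_r` for `s ≤ r`.
Since `T` maps a bounded set `B` to a set of bounded `L^q`-diameter, on `B` the `L^s`-distance is
dominated by a power of the `L^2`-distance, so the total boundedness of the `L^2`-image of `B`
passes to its `L^s`-image; `L^s` is complete, so the closure of that image is compact.
-/

section LpInterpolation

variable {α E : Type*} [MeasurableSpace α] {μ : Measure α} [NormedAddCommGroup E]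

theorem eLpNorm_le_eLpNorm_rpow_mul_eLpNorm_rpow {p₀ p₁ p : ℝ≥0∞} {θ : ℝ} (hθ₀ : 0 < θ)
    (hθ₁ : θ < 1) (hp : p⁻¹ = ENNReal.ofReal θ / p₀ + ENNReal.ofReal (1 - θ) / p₁) {f : α → E}
    (hf : AEStronglyMeasurable f μ) :
    eLpNorm f p μ ≤ eLpNorm f p₀ μ ^ θ * eLpNorm f p₁ μ ^ (1 - θ) := by
  have hθ₀' : ENNReal.ofReal θ ≠ 0 := by simpa using hθ₀
  have hθ₁' : ENNReal.ofReal (1 - θ) ≠ 0 := by simpa using hθ₁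
  have : ENNReal.HolderTriple (p₀ / ENNReal.ofReal θ) (p₁ / ENNReal.ofReal (1 - θ)) p :=
    ⟨by rw [ENNReal.inv_div (by simp) (by simp [hθ₀']),
      ENNReal.inv_div (by simp) (by simp [hθ₁']), hp]⟩
  have hsplit : ∀ x, ‖‖f x‖ ^ θ * ‖f x‖ ^ (1 - θ)‖ = ‖f x‖ := fun x => by
    rw [← Real.rpow_add' (norm_nonneg _) (by simp), add_sub_cancel, Real.rpow_one, norm_norm]
  calc eLpNorm f p μ = eLpNorm (fun x => ‖f x‖ ^ θ * ‖f x‖ ^ (1 - θ)) p μ :=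
        eLpNorm_congr_norm_ae (ae_of_all _ fun x => (hsplit x).symm)
    _ ≤ 1 * eLpNorm (fun x => ‖f x‖ ^ θ) (p₀ / ENNReal.ofReal θ) μ *
          eLpNorm (fun x => ‖f x‖ ^ (1 - θ)) (p₁ / ENNReal.ofReal (1 - θ)) μ :=
        eLpNorm_le_eLpNorm_mul_eLpNorm'_of_norm
          (hf.norm.aemeasurable.pow_const θ).aestronglyMeasurable
          (hf.norm.aemeasurable.pow_const (1 - θ)).aestronglyMeasurable (· * ·) 1
          (ae_of_all _ fun x => by simp [norm_mul])
    _ = eLpNorm f p₀ μ ^ θ * eLpNorm f p₁ μ ^ (1 - θ) := by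
        rw [one_mul, eLpNorm_norm_rpow f hθ₀, eLpNorm_norm_rpow f (sub_pos.2 hθ₁),
          ENNReal.div_mul_cancel hθ₀' ENNReal.ofReal_ne_top,
          ENNReal.div_mul_cancel hθ₁' ENNReal.ofReal_ne_top]

theorem exists_eLpNorm_le_mul_eLpNorm_rpow_mul_eLpNorm_rpow [IsFiniteMeasure μ] {p₀ p₁ p : ℝ}
    (hp₀ : 0 < p₀) (hp₀₁ : p₀ < p₁) (hp : 0 < p) (hpp₁ : p < p₁) :
    ∃ C : ℝ≥0∞, C ≠ ∞ ∧ ∃ θ : ℝ, 0 < θ ∧ θ < 1 ∧ ∀ f : α → E, AEStronglyMeasurable f μ →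
      eLpNorm f (ENNReal.ofReal p) μ ≤
        C * (eLpNorm f (ENNReal.ofReal p₀) μ ^ θ * eLpNorm f (ENNReal.ofReal p₁) μ ^ (1 - θ)) := by
  set r := max p ((p₀ + p₁) / 2)
  have hp₀r : p₀ < r := lt_max_of_lt_right (by linarith)
  have hrp₁ : r < p₁ := max_lt hpp₁ (by linarith)
  have hr : 0 < r := hp₀.trans hp₀r
  set θ := (r⁻¹ - p₁⁻¹) / (p₀⁻¹ - p₁⁻¹)
  have hden : 0 < p₀⁻¹ - p₁⁻¹ := sub_pos.2 (inv_strictAnti₀ hp₀ hp₀₁)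
  have hθ₀ : 0 < θ := div_pos (sub_pos.2 (inv_strictAnti₀ hr hrp₁)) hden
  have hθ₁ : θ < 1 := (div_lt_one hden).2 (by linarith [inv_strictAnti₀ hp₀ hp₀r])
  have hinv : (ENNReal.ofReal r)⁻¹ =
      ENNReal.ofReal θ / ENNReal.ofReal p₀ + ENNReal.ofReal (1 - θ) / ENNReal.ofReal p₁ := by
    rw [← ENNReal.ofReal_inv_of_pos hr, ← ENNReal.ofReal_div_of_pos hp₀,
      ← ENNReal.ofReal_div_of_pos (hp₀.trans hp₀₁),
      ← ENNReal.ofReal_add (div_pos hθ₀ hp₀).le (div_nonneg (sub_pos.2 hθ₁).le (by linarith))]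
    have hθ : θ * (p₀⁻¹ - p₁⁻¹) = r⁻¹ - p₁⁻¹ := div_mul_cancel₀ _ hden.ne'
    congr 1
    rw [div_eq_mul_inv, div_eq_mul_inv]
    linarith
  refine ⟨μ Set.univ ^ (1 / p - 1 / r), ?_, θ, hθ₀, hθ₁, fun f hf => ?_⟩
  · exact ENNReal.rpow_ne_top_of_nonneg
      (sub_nonneg.2 (one_div_le_one_div_of_le hp (le_max_left _ _))) (measure_ne_top μ _)
  calc eLpNorm f (ENNReal.ofReal p) μ
        ≤ eLpNorm f (ENNReal.ofReal r) μ * μ Set.univ ^ (1 / p - 1 / r) := by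
        have := eLpNorm_le_eLpNorm_mul_rpow_measure_univ
          (ENNReal.ofReal_le_ofReal (le_max_left p ((p₀ + p₁) / 2))) hf
        rwa [ENNReal.toReal_ofReal hp.le, ENNReal.toReal_ofReal hr.le] at this
    _ ≤ _ := by
        rw [mul_comm]
        gcongr
        exact eLpNorm_le_eLpNorm_rpow_mul_eLpNorm_rpow hθ₀ hθ₁ hinv hf

end LpInterpolation

theorem TotallyBounded.image_of_edist_le_mul_rpow {α β γ : Type*} [PseudoEMetricSpace β]
    [PseudoEMetricSpace γ] {f : α → β} {g : α → γ} {S : Set α} {C : ℝ≥0∞} {r : ℝ}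
    (hC : C ≠ ∞) (hr : 0 < r)
    (hfg : ∀ u ∈ S, ∀ v ∈ S, edist (g u) (g v) ≤ C * edist (f u) (f v) ^ r)
    (hf : TotallyBounded (f '' S)) : TotallyBounded (g '' S) := by
  rw [EMetric.totallyBounded_iff]
  intro ε hε
  obtain ⟨δ, hδ, hδε⟩ := ENNReal.nhds_zero_basis.mem_iff.1
    (ENNReal.tendsto_const_mul_rpow_nhds_zero_of_pos hC hr (gt_mem_nhds hε))
  obtain ⟨t, htS, htfin, hcover⟩ := Set.exists_subset_image_finite_and.1
    (EMetric.totallyBounded_iff'.1 hf δ hδ)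
  refine ⟨g '' t, htfin.image g, ?_⟩
  rintro _ ⟨u, hu, rfl⟩
  obtain ⟨_, ⟨v, hv, rfl⟩, huv⟩ := Set.mem_iUnion₂.1 (hcover (Set.mem_image_of_mem f hu))
  exact Set.mem_iUnion₂.2
    ⟨g v, Set.mem_image_of_mem g hv, (hfg u hu v (htS hv)).trans_lt (hδε huv)⟩

/-- Variant of the abstract Rellich–Kondrachov theorem used in the paper
(cf. Proposition 2.6 / Proposition 2.7): if `T : G → L^q(Y, μ)` is a bounded injective
linear map on a finite measure space with `q > 2`, and the induced map `G → L²(Y, μ)`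
is a compact operator, then for every `1 ≤ s < q` the induced map `G → L^s(Y, μ)`
is compact. -/
theorem stmt_1
    {Y : Type*} [MeasurableSpace Y] (μ : Measure Y) [IsFiniteMeasure μ]
    (q : ℝ) (hq : 2 < q) [Fact (1 ≤ ENNReal.ofReal q)]
    {G : Type*} [NormedAddCommGroup G] [NormedSpace ℝ G]
    (T : G →L[ℝ] Lp ℝ (ENNReal.ofReal q) μ)
    (h2cpt : ∀ B : Set G, IsBounded B →
      IsCompact (closure ((fun u : G =>
        ((Lp.memLp (T u)).mono_exponent
          (show (2 : ℝ≥0∞) ≤ ENNReal.ofReal q by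
            simpa using ENNReal.ofReal_le_ofReal hq.le)).toLp
          (T u : Y → ℝ)) '' B)))
    (s : ℝ) (hs1 : 1 ≤ s) (hsq : s < q) [Fact (1 ≤ ENNReal.ofReal s)] :
    ∀ B : Set G, IsBounded B →
      IsCompact (closure ((fun u : G =>
        ((Lp.memLp (T u)).mono_exponent
          (ENNReal.ofReal_le_ofReal hsq.le)).toLp (T u : Y → ℝ)) '' B)) := by
  intro B hB
  obtain ⟨C, hC, θ, hθ₀, hθ₁, hinterp⟩ := exists_eLpNorm_le_mul_eLpNorm_rpow_mul_eLpNorm_rpow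
    (μ := μ) (E := ℝ) two_pos hq (by linarith) hsq
  have hdiam : Metric.ediam (T '' B) ≠ ∞ :=
    Metric.isBounded_iff_ediam_ne_top.1 (T.lipschitz.isBounded_image hB)
  refine (TotallyBounded.closure ?_).isCompact_of_isClosed isClosed_closure
  refine ((h2cpt B hB).totallyBounded.subset subset_closure).image_of_edist_le_mul_rpow
    (ENNReal.mul_ne_top hC (ENNReal.rpow_ne_top_of_nonneg (sub_pos.2 hθ₁).le hdiam)) hθ₀
    fun u hu v hv => ?_
  have hTuv : eLpNorm (⇑(T u) - ⇑(T v)) (ENNReal.ofReal q) μ ≤ Metric.ediam (T '' B) :=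
    Lp.edist_def (T u) (T v) ▸
      Metric.edist_le_ediam_of_mem (Set.mem_image_of_mem T hu) (Set.mem_image_of_mem T hv)
  simp only [Lp.edist_toLp_toLp]
  calc _ ≤ C * (eLpNorm (⇑(T u) - ⇑(T v)) (ENNReal.ofReal 2) μ ^ θ *
          eLpNorm (⇑(T u) - ⇑(T v)) (ENNReal.ofReal q) μ ^ (1 - θ)) :=
        hinterp _ ((Lp.aestronglyMeasurable _).sub (Lp.aestronglyMeasurable _))
    _ ≤ _ := by
        rw [ENNReal.ofReal_ofNat, mul_comm (_ ^ θ), ← mul_assoc]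
        gcongr
end

section
/- Let V be a reflexive real Banach space and let E : V → ℝ be a C¹ functional whose Fréchet derivative at u is denoted DE(u) ∈ V*. Assume: (1) every Palais–Smale sequence for E is bounded in V; (2) for every u ∈ V one can decompose DE(u) = L(u) + K(u), where L : V → V* is a fixed bounded invertible linear map (a continuous linear bijection with continuous inverse) and K : V → V* maps bounded subsets of V to relatively compact subsets of V*. Then E satisfies the Palais–Smale condition. -/
open Filter Bornology Topology

/-! Bounding a Palais–Smale sequence `u` puts `K ∘ u` in a compact set, so along a subsequence
`K (u m) → w`. Since `L (u m) = DE (u m) - K (u m) → -w` and `L` has a continuous inverse, that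
subsequence converges to `L⁻¹ (-w)`. -/

theorem ContinuousLinearEquiv.tendsto_of_tendsto_add_of_tendsto {R E F α : Type*} [Semiring R]
    [AddCommGroup E] [TopologicalSpace E] [Module R E]
    [AddCommGroup F] [TopologicalSpace F] [IsTopologicalAddGroup F] [Module R F]
    (L : E ≃L[R] F) {l : Filter α} {u : α → E} {k : α → F} {w : F}
    (hsum : Tendsto (fun a => L (u a) + k a) l (𝓝 0)) (hk : Tendsto k l (𝓝 w)) :
    Tendsto u l (𝓝 (L.symm (-w))) := by
  have h := (L.symm.continuous.tendsto _).comp (hsum.sub hk)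
  simpa [Function.comp_def] using h

theorem stmt_3_general {V : Type*} [NormedAddCommGroup V] [NormedSpace ℝ V]
    (E : V → ℝ)
    (hbdd : ∀ u : ℕ → V,
      (∃ C : ℝ, ∀ m, |E (u m)| ≤ C) →
      Tendsto (fun m => ‖fderiv ℝ E (u m)‖) atTop (nhds 0) →
      IsBounded (Set.range u))
    (L : V ≃L[ℝ] (V →L[ℝ] ℝ)) (K : V → (V →L[ℝ] ℝ))
    (hdecomp : ∀ u : V, fderiv ℝ E u = L u + K u)
    (hK : ∀ B : Set V, IsBounded B → IsCompact (closure (K '' B))) :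
    ∀ u : ℕ → V,
      (∃ C : ℝ, ∀ m, |E (u m)| ≤ C) →
      Tendsto (fun m => ‖fderiv ℝ E (u m)‖) atTop (nhds 0) →
      ∃ (k : ℕ → ℕ) (v : V), StrictMono k ∧ Tendsto (u ∘ k) atTop (nhds v) := by
  intro u hEu hDu
  obtain ⟨w, -, φ, hφ, hKφ⟩ := (hK _ (hbdd u hEu hDu)).tendsto_subseq
    fun n => subset_closure (Set.mem_image_of_mem K (Set.mem_range_self n))
  refine ⟨φ, L.symm (-w), hφ, L.tendsto_of_tendsto_add_of_tendsto ?_ hKφ⟩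
  simp only [Function.comp_apply, ← hdecomp]
  exact tendsto_zero_iff_norm_tendsto_zero.2 (hDu.comp hφ.tendsto_atTop)

/-- Sufficient criterion for the Palais–Smale condition (Proposition 2.10 of the paper,
cf. Struwe): on a reflexive real Banach space `V`, if every Palais–Smale sequence of a `C¹`
functional `E` is bounded, and `DE = L + K` with `L : V → V*` a bounded invertible linear
map and `K` mapping bounded sets to relatively compact sets, then `E` satisfies the
Palais–Smale condition. -/
theorem stmt_3 {V : Type*} [NormedAddCommGroup V] [NormedSpace ℝ V] [CompleteSpace V]
    (hrefl : Function.Surjective ⇑(NormedSpace.inclusionInDoubleDual ℝ V))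
    (E : V → ℝ) (hE : ContDiff ℝ 1 E)
    (hbdd : ∀ u : ℕ → V,
      (∃ C : ℝ, ∀ m, |E (u m)| ≤ C) →
      Tendsto (fun m => ‖fderiv ℝ E (u m)‖) atTop (nhds 0) →
      IsBounded (Set.range u))
    (L : V ≃L[ℝ] (V →L[ℝ] ℝ)) (K : V → (V →L[ℝ] ℝ))
    (hdecomp : ∀ u : V, fderiv ℝ E u = L u + K u)
    (hK : ∀ B : Set V, IsBounded B → IsCompact (closure (K '' B))) :
    ∀ u : ℕ → V,
      (∃ C : ℝ, ∀ m, |E (u m)| ≤ C) →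
      Tendsto (fun m => ‖fderiv ℝ E (u m)‖) atTop (nhds 0) →
      ∃ (k : ℕ → ℕ) (v : V), StrictMono k ∧ Tendsto (u ∘ k) atTop (nhds v) :=
  stmt_3_general E hbdd L K hdecomp hK
end

section
/- (Mountain Pass Theorem) Let V be a real Banach space and let E : V → ℝ be a C¹ functional satisfying the Palais–Smale condition. Assume: (1) E(0) = 0; (2) there exist ρ > 0 and α > 0 such that E(u) ≥ α for every u ∈ V with ‖u‖_V = ρ; (3) there exists u₁ ∈ V with ‖u₁‖_V > ρ and E(u₁) ≤ 0. Define P = { l ∈ C([0,1], V) : l(0) = 0, l(1) = u₁ } and c = inf_{l ∈ P} sup_{t ∈ [0,1]} E(l(t)). Then c ≥ α and c is a critical value of E, i.e., there exists u ∈ V with E(u) = c and DE(u) = 0. -/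
/-!
Every path from `0` to `u₁` crosses the sphere `‖u‖ = ρ`, so `c ≥ α > 0 ≥ E` at the endpoints.
Ekeland's variational principle, applied to `γ ↦ max E ∘ γ` on the complete space of such
paths, yields for every `ε > 0` a path whose maximum is within `ε` of `c` and cannot be lowered
by more than `ε` times the size of any perturbation. At some maximum point of that path
`‖DE‖ ≤ ε`: otherwise a partition of unity glues local descent directions into a continuous
field, bounded by `1` and vanishing at the endpoints, and moving the path a distance `τ` along it
lowers the maximum by more than `ετ`. Letting `ε → 0` gives a Palais–Smale sequence at level
`c`, and a limit point of it is a critical point at level `c`.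
-/

open Filter Set Topology

namespace Ekeland

variable {X : Type*} [PseudoMetricSpace X] (f : X → ℝ) (ε : ℝ)

def improvementSet (x : X) : Set X := {y | f y + ε * dist x y ≤ f x}

variable {f ε}

theorem self_mem_improvementSet (x : X) : x ∈ improvementSet f ε x := by
  simp [improvementSet]

theorem improvementSet_subset (hε : 0 ≤ ε) {x y : X} (hy : y ∈ improvementSet f ε x) :
    improvementSet f ε y ⊆ improvementSet f ε x := fun z (hz : f z + ε * dist y z ≤ f y) =>
  show f z + ε * dist x z ≤ f x by nlinarith [dist_triangle x y z, hy.out]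

theorem isClosed_improvementSet (hf : LowerSemicontinuous f) (x : X) :
    IsClosed (improvementSet f ε x) :=
  (hf.add (continuous_const.mul (continuous_const.dist continuous_id)).lowerSemicontinuous
    ).isClosed_preimage (f x)

theorem dist_le_of_mem_improvementSet (hbdd : BddBelow (range f)) (hε : 0 < ε) {x y : X}
    (hy : y ∈ improvementSet f ε x) {r : ℝ}
    (hyr : f y ≤ sInf (f '' improvementSet f ε x) + ε * r) {z : X}
    (hz : z ∈ improvementSet f ε y) : dist y z ≤ r := by
  have hinf : sInf (f '' improvementSet f ε x) ≤ f z :=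
    csInf_le (hbdd.mono (image_subset_range _ _)) ⟨z, improvementSet_subset hε.le hy hz, rfl⟩
  have hz' : f z + ε * dist y z ≤ f y := hz
  nlinarith

end Ekeland

open Ekeland in
theorem LowerSemicontinuous.exists_forall_le_add_mul_dist {X : Type*} [MetricSpace X]
    [CompleteSpace X] {f : X → ℝ} (hf : LowerSemicontinuous f) (hbdd : BddBelow (range f))
    {ε : ℝ} (hε : 0 < ε) (x₀ : X) :
    ∃ x, f x ≤ f x₀ ∧ ∀ y, f x ≤ f y + ε * dist x y := by
  set S := improvementSet f ε
  have almost_min : ∀ x (n : ℕ), ∃ y ∈ S x, f y ≤ sInf (f '' S x) + ε * (1 / 2) ^ n := by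
    intro x n
    obtain ⟨_, ⟨y, hy, rfl⟩, hlt⟩ := Real.lt_sInf_add_pos (s := f '' S x)
      ⟨f x, x, self_mem_improvementSet x, rfl⟩ (by positivity : 0 < ε * (1 / 2 : ℝ) ^ n)
    exact ⟨y, hy, hlt.le⟩
  choose g hgS hg using almost_min
  let u : ℕ → X := fun n => Nat.rec (g x₀ 0) (fun k x => g x (k + 1)) n
  have hu_small : ∀ n, ∀ y ∈ S (u n), ∀ z ∈ S (u n), dist y z ≤ 2 * (1 / 2) ^ n := by
    intro n y hy z hz
    have hsmall : ∀ w ∈ S (u n), dist (u n) w ≤ (1 / 2) ^ n := by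
      -- `u n` is `g x n` for some `x`
      cases n <;> exact fun w => dist_le_of_mem_improvementSet hbdd hε (hgS _ _) (hg _ _)
    linarith [dist_triangle_left y z (u n), hsmall y hy, hsmall z hz]
  have hu_anti : Antitone (S ∘ u) :=
    antitone_nat_of_succ_le fun n => improvementSet_subset hε.le (hgS (u n) (n + 1))
  have hu_mem : ∀ n m, n ≤ m → u m ∈ S (u n) := fun n m h =>
    hu_anti h (self_mem_improvementSet (u m))
  have hgeom : Tendsto (fun n : ℕ => 2 * (1 / 2 : ℝ) ^ n) atTop (𝓝 0) := by
    simpa using (tendsto_pow_atTop_nhds_zero_of_lt_one (r := (1 / 2 : ℝ)) (by norm_num)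
      (by norm_num)).const_mul 2
  obtain ⟨x, hx⟩ := cauchySeq_tendsto_of_complete <| cauchySeq_of_le_tendsto_0 _
    (fun n m N hn hm => hu_small N _ (hu_mem N n hn) _ (hu_mem N m hm)) hgeom
  have hx_mem : ∀ n, x ∈ S (u n) := fun n =>
    (isClosed_improvementSet hf _).mem_of_tendsto hx
      ((eventually_ge_atTop n).mono fun m => hu_mem n m)
  refine ⟨x, ?_, fun y => ?_⟩
  · have hx₀ : f x + ε * dist x₀ x ≤ f x₀ := improvementSet_subset hε.le (hgS x₀ 0) (hx_mem 0)
    nlinarith [dist_nonneg (x := x₀) (y := x)]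
  · by_cases hy : y ∈ S x
    · have hxy : dist x y ≤ 0 := ge_of_tendsto' hgeom fun n =>
        hu_small n x (hx_mem n) y (improvementSet_subset hε.le (hx_mem n) hy)
      simp [dist_le_zero.mp hxy]
    · exact (not_le.mp hy).le

theorem ContinuousLinearMap.exists_norm_le_one_apply_lt_neg {V : Type*} [NormedAddCommGroup V]
    [NormedSpace ℝ V] (L : V →L[ℝ] ℝ) {ε : ℝ} (hε : ε < ‖L‖) : ∃ v, ‖v‖ ≤ 1 ∧ L v < -ε := by
  obtain ⟨w, hw, hLw⟩ := L.exists_lt_apply_of_lt_opNorm hε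
  rcases lt_abs.mp hLw with hpos | hneg
  · exact ⟨-w, by simpa using hw.le, by simpa using hpos⟩
  · exact ⟨w, hw.le, by linarith⟩

section Descent

variable {V : Type*} [NormedAddCommGroup V] [NormedSpace ℝ V]

theorem exists_continuous_descent_field {X : Type*} [TopologicalSpace X] [NormalSpace X]
    [ParacompactSpace X] {L : X → V →L[ℝ] ℝ} (hL : Continuous L) {M A : Set X}
    (hM : IsClosed M) (hA : IsClosed A) (hMA : Disjoint M A) {ε : ℝ}
    (hε : ∀ s ∈ M, ε < ‖L s‖) :
    ∃ h : C(X, V), (∀ s, ‖h s‖ ≤ 1) ∧ (∀ s ∈ A, h s = 0) ∧ ∀ s ∈ M, L s (h s) < -ε := by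
  let t : X → Set V := fun s =>
    Metric.closedBall 0 1 ∩ {w | s ∈ A → w = 0} ∩ {w | s ∈ M → L s w < -ε}
  have ht : ∀ s, Convex ℝ (t s) := by
    intro s
    refine ((convex_closedBall 0 1).inter ?_).inter ?_
    · by_cases hs : s ∈ A <;> simp [hs, convex_singleton, convex_univ]
    · by_cases hs : s ∈ M
      · simpa [hs] using convex_halfSpace_lt (L s).isLinear (-ε)
      · simp [hs, convex_univ]
  obtain ⟨h, hh⟩ := exists_continuous_forall_mem_convex_of_local_const ht fun s => by
    by_cases hs : s ∈ M
    · obtain ⟨v, hv, hLv⟩ := (L s).exists_norm_le_one_apply_lt_neg (hε s hs)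
      have hnotA : ∀ᶠ r in 𝓝 s, r ∉ A := hA.isOpen_compl.mem_nhds (hMA.notMem_of_mem_left hs)
      have hdesc : ∀ᶠ r in 𝓝 s, L r v < -ε :=
        (hL.clm_apply continuous_const).continuousAt.eventually_lt continuousAt_const hLv
      exact ⟨v, by filter_upwards [hnotA, hdesc] with r hr hLr using
        ⟨⟨by simpa using hv, fun h => absurd h hr⟩, fun _ => hLr⟩⟩
    · exact ⟨0, by filter_upwards [hM.isOpen_compl.mem_nhds hs] with r hr using
        ⟨⟨by simp, fun _ => rfl⟩, fun h => absurd h hr⟩⟩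
  exact ⟨h, fun s => by simpa using (hh s).1.1, fun s hs => (hh s).1.2 hs,
    fun s hs => (hh s).2 hs⟩

theorem apply_add_smul_lt_of_fderiv_apply_lt {E : V → ℝ} (hE : Differentiable ℝ E) {x v : V}
    {ε τ : ℝ} (hτ : 0 < τ) (hD : ∀ ξ ∈ Ioo 0 τ, fderiv ℝ E (x + ξ • v) v < -ε) :
    E (x + τ • v) < E x - ε * τ := by
  have hderiv : ∀ ξ : ℝ,
      HasDerivAt (fun ξ : ℝ => E (x + ξ • v)) (fderiv ℝ E (x + ξ • v) v) ξ := fun ξ => by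
    have hcomp := (hE (x + ξ • v)).hasFDerivAt.comp_hasDerivAt ξ
      (((hasDerivAt_id' ξ).smul_const v).const_add x)
    rwa [one_smul] at hcomp
  obtain ⟨ξ, hξ, hslope⟩ := exists_hasDerivAt_eq_slope _ _ hτ
    (fun ξ _ => (hderiv ξ).continuousAt.continuousWithinAt) fun ξ _ => hderiv ξ
  have hlt := hD ξ hξ
  rw [hslope, zero_smul, add_zero, sub_zero, div_lt_iff₀ hτ] at hlt
  linarith

theorem eventually_forall_apply_add_smul_lt {K : Type*} [TopologicalSpace K] [CompactSpace K]
    {E : V → ℝ} (hE : ContDiff ℝ 1 E) {γ h : K → V} (hγ : Continuous γ) (hh : Continuous h)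
    {Φ ε : ℝ} (hΦ : ∀ s, E (γ s) ≤ Φ)
    (hdesc : ∀ s, E (γ s) = Φ → fderiv ℝ E (γ s) (h s) < -ε) :
    ∀ᶠ τ in 𝓝[>] 0, ∀ s, E (γ s + τ • h s) < Φ - ε * τ := by
  have hseg : Continuous fun z : ℝ × K => γ z.2 + z.1 • h z.2 := by fun_prop
  have hloc : ∀ s ∈ univ, ∀ᶠ z : ℝ × K in 𝓝 (0, s),
      z.1 ∈ Ioi 0 → E (γ z.2 + z.1 • h z.2) < Φ - ε * z.1 := by
    intro s _
    rcases (hΦ s).lt_or_eq with hlt | heq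
    · have hcont : Continuous fun z : ℝ × K => E (γ z.2 + z.1 • h z.2) + ε * z.1 :=
        (hE.continuous.comp hseg).add (by fun_prop)
      filter_upwards [hcont.continuousAt.eventually_lt continuousAt_const (by simpa using hlt)]
        with z hz _ using by linarith
    · have hq : Continuous fun z : ℝ × K => fderiv ℝ E (γ z.2 + z.1 • h z.2) (h z.2) :=
        ((hE.continuous_fderiv one_ne_zero).comp hseg).clm_apply (hh.comp continuous_snd)
      have hq_lt := (hq.continuousAt (x := ((0 : ℝ), s))).eventually_lt continuousAt_const
        (by simpa using hdesc s heq)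
      rw [nhds_prod_eq, eventually_prod_iff] at hq_lt
      obtain ⟨pa, hpa, pb, hpb, hp⟩ := hq_lt
      obtain ⟨r, hr, hball⟩ := Metric.eventually_nhds_iff.mp hpa
      rw [nhds_prod_eq]
      filter_upwards [prod_mem_prod (Metric.ball_mem_nhds (0 : ℝ) hr) hpb]
        with z hz (hpos : 0 < z.1)
      have hz1 : z.1 < r := by simpa [abs_of_pos hpos] using hz.1
      calc E (γ z.2 + z.1 • h z.2) < E (γ z.2) - ε * z.1 :=
            apply_add_smul_lt_of_fderiv_apply_lt (hE.differentiable one_ne_zero) hpos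
              fun ξ hξ => hp (hball (show dist ξ 0 < r by
                rw [Real.dist_0_eq_abs, abs_of_pos hξ.1]; exact hξ.2.trans hz1)) hz.2
        _ ≤ Φ - ε * z.1 := by linarith [hΦ z.2]
  rw [eventually_nhdsWithin_iff]
  exact (isCompact_univ.eventually_forall_of_forall_eventually
    (P := fun τ s => τ ∈ Ioi 0 → E (γ s + τ • h s) < Φ - ε * τ) hloc).mono
    fun τ hτ hpos s => hτ s trivial hpos

end Descent

section MaxAlong

variable {V K : Type*} [TopologicalSpace V] [TopologicalSpace K] [CompactSpace K] {E : V → ℝ}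

noncomputable def maxAlong (E : V → ℝ) (γ : C(K, V)) : ℝ := ⨆ s, E (γ s)

theorem bddAbove_range_apply (hE : Continuous E) (γ : C(K, V)) :
    BddAbove (range fun s => E (γ s)) :=
  (isCompact_range (hE.comp γ.continuous)).bddAbove

theorem le_maxAlong (hE : Continuous E) (γ : C(K, V)) (s : K) : E (γ s) ≤ maxAlong E γ :=
  le_ciSup (bddAbove_range_apply hE γ) s

theorem maxAlong_lt [Nonempty K] {γ : C(K, V)} {b : ℝ} (hE : Continuous E)
    (h : ∀ s, E (γ s) < b) : maxAlong E γ < b := by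
  obtain ⟨s, -, hs⟩ :=
    isCompact_univ.exists_isMaxOn univ_nonempty (hE.comp γ.continuous).continuousOn
  exact (ciSup_le fun r => hs (mem_univ r)).trans_lt (h s)

theorem lowerSemicontinuous_maxAlong (hE : Continuous E) :
    LowerSemicontinuous (maxAlong E : C(K, V) → ℝ) :=
  lowerSemicontinuous_ciSup (bddAbove_range_apply hE) fun s =>
    (hE.comp (continuous_eval_const s)).lowerSemicontinuous

end MaxAlong

section Minimax

variable {V K : Type*} [NormedAddCommGroup V] [NormedSpace ℝ V]
  [TopologicalSpace K] [CompactSpace K] [T2Space K] [Nonempty K]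
  {E : V → ℝ} {Γ : Set C(K, V)} {A : Set K}

/-- Otherwise, pushing `γ` along a descent field that vanishes on `A` would lower the maximum by
more than `ε` times the displacement. -/
theorem exists_apply_eq_maxAlong_norm_fderiv_le (hE : ContDiff ℝ 1 E) (hA : IsClosed A)
    (hΓA : ∀ γ ∈ Γ, ∀ h : C(K, V), (∀ a ∈ A, h a = 0) → γ + h ∈ Γ) {γ : C(K, V)} (hγ : γ ∈ Γ)
    (hγA : ∀ a ∈ A, E (γ a) < maxAlong E γ) {ε : ℝ} (hε : 0 ≤ ε)
    (hγ_min : ∀ γ' ∈ Γ, maxAlong E γ ≤ maxAlong E γ' + ε * dist γ γ') :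
    ∃ s, E (γ s) = maxAlong E γ ∧ ‖fderiv ℝ E (γ s)‖ ≤ ε := by
  by_contra! hcrit
  have hM : IsClosed {s | E (γ s) = maxAlong E γ} :=
    isClosed_eq (hE.continuous.comp γ.continuous) continuous_const
  have hMA : Disjoint {s | E (γ s) = maxAlong E γ} A :=
    disjoint_left.mpr fun s hs hsA => (hγA s hsA).ne hs
  obtain ⟨h, hh_le, hhA, hhM⟩ := exists_continuous_descent_field
    ((hE.continuous_fderiv one_ne_zero).comp γ.continuous) hM hA hMA hcrit
  obtain ⟨τ, hτ, hτ_pos⟩ := ((eventually_forall_apply_add_smul_lt hE γ.continuous h.continuous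
    (le_maxAlong hE.continuous γ) hhM).and self_mem_nhdsWithin).exists
  have hdist : dist γ (γ + τ • h) ≤ τ := (ContinuousMap.dist_le hτ_pos.le).mpr fun s => by
    simpa [dist_eq_norm, norm_smul, abs_of_pos hτ_pos] using
      mul_le_mul_of_nonneg_left (hh_le s) hτ_pos.le
  have hlower : maxAlong E (γ + τ • h) < maxAlong E γ - ε * τ :=
    maxAlong_lt hE.continuous hτ
  have := hγ_min _ (hΓA γ hγ (τ • h) fun a ha => by simp [hhA a ha])
  nlinarith [mul_le_mul_of_nonneg_left hdist hε]

theorem exists_dist_le_norm_fderiv_le_of_isGLB_maxAlong [CompleteSpace V] (hE : ContDiff ℝ 1 E)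
    (hΓ : IsClosed Γ) (hA : IsClosed A)
    (hΓA : ∀ γ ∈ Γ, ∀ h : C(K, V), (∀ a ∈ A, h a = 0) → γ + h ∈ Γ) {c : ℝ}
    (hc : IsGLB (maxAlong E '' Γ) c) (hAc : ∀ γ ∈ Γ, ∀ a ∈ A, E (γ a) < c) {ε : ℝ}
    (hε : 0 < ε) : ∃ u, dist (E u) c ≤ ε ∧ ‖fderiv ℝ E u‖ ≤ ε := by
  obtain ⟨_, ⟨γ₀, hγ₀, rfl⟩, hγ₀c⟩ := (isGLB_lt_iff hc).mp (lt_add_of_pos_right c hε)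
  have : CompleteSpace Γ := hΓ.completeSpace_coe
  let Φ : Γ → ℝ := fun γ => maxAlong E γ.1
  have hΦ : LowerSemicontinuous Φ :=
    (lowerSemicontinuous_maxAlong hE.continuous).comp continuous_subtype_val
  have hcΦ : ∀ γ, c ≤ Φ γ := fun γ => hc.1 ⟨γ, γ.2, rfl⟩
  obtain ⟨⟨γ, hγ⟩, hγγ₀, hγ_min⟩ :=
    hΦ.exists_forall_le_add_mul_dist ⟨c, forall_mem_range.mpr hcΦ⟩ hε ⟨γ₀, hγ₀⟩
  have hcγ : c ≤ maxAlong E γ := hcΦ ⟨γ, hγ⟩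
  obtain ⟨s, hs, hsD⟩ := exists_apply_eq_maxAlong_norm_fderiv_le hE hA hΓA hγ
    (fun a ha => (hAc γ hγ a ha).trans_le hcγ) hε.le fun γ' hγ' => hγ_min ⟨γ', hγ'⟩
  refine ⟨γ s, ?_, hsD⟩
  rw [Real.dist_eq, abs_le]
  constructor <;> linarith [show maxAlong E γ ≤ maxAlong E γ₀ from hγγ₀]

end Minimax

section PalaisSmale

variable {V : Type*} [NormedAddCommGroup V] [NormedSpace ℝ V]

def PalaisSmale (E : V → ℝ) : Prop :=
  ∀ u : ℕ → V, (∃ C : ℝ, ∀ m, |E (u m)| ≤ C) →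
    Tendsto (fun m => ‖fderiv ℝ E (u m)‖) atTop (𝓝 0) →
    ∃ (k : ℕ → ℕ) (v : V), StrictMono k ∧ Tendsto (u ∘ k) atTop (𝓝 v)

theorem PalaisSmale.exists_eq_fderiv_eq_zero {E : V → ℝ} (hPS : PalaisSmale E)
    (hE : ContDiff ℝ 1 E) {c : ℝ}
    (hc : ∀ ε > 0, ∃ u, dist (E u) c ≤ ε ∧ ‖fderiv ℝ E u‖ ≤ ε) :
    ∃ u, E u = c ∧ fderiv ℝ E u = 0 := by
  choose u hEu hDu using fun m : ℕ => hc (1 / (m + 1)) Nat.one_div_pos_of_nat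
  have hE_lim : Tendsto (fun m => E (u m)) atTop (𝓝 c) := tendsto_iff_dist_tendsto_zero.mpr <|
    squeeze_zero (fun _ => dist_nonneg) hEu tendsto_one_div_add_atTop_nhds_zero_nat
  have hD_lim : Tendsto (fun m => ‖fderiv ℝ E (u m)‖) atTop (𝓝 0) :=
    squeeze_zero (fun _ => norm_nonneg _) hDu tendsto_one_div_add_atTop_nhds_zero_nat
  obtain ⟨C, hC⟩ := hE_lim.abs.bddAbove_range
  obtain ⟨k, v, hk, hv⟩ := hPS u ⟨C, fun m => hC ⟨m, rfl⟩⟩ hD_lim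
  exact ⟨v, tendsto_nhds_unique ((hE.continuous.tendsto v).comp hv) (hE_lim.comp hk.tendsto_atTop),
    tendsto_nhds_unique (((hE.continuous_fderiv one_ne_zero).tendsto v).comp hv)
      ((tendsto_zero_iff_norm_tendsto_zero.mpr hD_lim).comp hk.tendsto_atTop)⟩

end PalaisSmale

/-- Mountain Pass Theorem (Proposition 2.11 of the paper; Ambrosetti–Rabinowitz).
If a `C¹` functional `E` on a real Banach space satisfies the Palais–Smale condition,
`E(0) = 0`, `E ≥ α > 0` on the sphere of radius `ρ > 0`, and `E(u₁) ≤ 0` for some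
`u₁` with `‖u₁‖ > ρ`, then the minimax value `c` over paths joining `0` to `u₁`
satisfies `c ≥ α` and is a critical value of `E`. -/
theorem stmt_4 {V : Type*} [NormedAddCommGroup V] [NormedSpace ℝ V] [CompleteSpace V]
    (E : V → ℝ) (hE : ContDiff ℝ 1 E)
    (hPS : ∀ u : ℕ → V,
      (∃ C : ℝ, ∀ m, |E (u m)| ≤ C) →
      Tendsto (fun m => ‖fderiv ℝ E (u m)‖) atTop (nhds 0) →
      ∃ (k : ℕ → ℕ) (v : V), StrictMono k ∧ Tendsto (u ∘ k) atTop (nhds v))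
    (hE0 : E 0 = 0)
    (ρ α : ℝ) (hρ : 0 < ρ) (hα : 0 < α)
    (hsphere : ∀ u : V, ‖u‖ = ρ → α ≤ E u)
    (u₁ : V) (hu₁ : ρ < ‖u₁‖) (hEu₁ : E u₁ ≤ 0)
    (c : ℝ)
    (hc : c = sInf { b : ℝ | ∃ l : C(Set.Icc (0:ℝ) 1, V),
      l ⟨0, Set.left_mem_Icc.mpr zero_le_one⟩ = 0 ∧
      l ⟨1, Set.right_mem_Icc.mpr zero_le_one⟩ = u₁ ∧
      b = ⨆ t : Set.Icc (0:ℝ) 1, E (l t) }) :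
    α ≤ c ∧ ∃ u : V, E u = c ∧ fderiv ℝ E u = 0 := by
  set t₀ : Icc (0:ℝ) 1 := ⟨0, left_mem_Icc.mpr zero_le_one⟩
  set t₁ : Icc (0:ℝ) 1 := ⟨1, right_mem_Icc.mpr zero_le_one⟩
  set Γ : Set C(Icc (0:ℝ) 1, V) := {l | l t₀ = 0 ∧ l t₁ = u₁}
  have hΓ : IsClosed Γ := (isClosed_eq (continuous_eval_const t₀) continuous_const).inter
    (isClosed_eq (continuous_eval_const t₁) continuous_const)
  have hΓA : ∀ γ ∈ Γ, ∀ h : C(Icc (0:ℝ) 1, V), (∀ a ∈ ({t₀, t₁} : Set _), h a = 0) → γ + h ∈ Γ :=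
    fun γ hγ h hh => by simp [Γ, hh, hγ.1, hγ.2]
  have hcross : ∀ l ∈ Γ, α ≤ maxAlong E l := by
    rintro l ⟨hl₀, hl₁⟩
    obtain ⟨t, ht⟩ := intermediate_value_univ t₀ t₁ (continuous_norm.comp l.continuous)
      (show ρ ∈ Icc ‖l t₀‖ ‖l t₁‖ by simp [hl₀, hl₁, hρ.le, hu₁.le])
    exact (hsphere _ ht).trans (le_maxAlong hE.continuous l t)
  have hline : (⟨fun t => (t : ℝ) • u₁, by fun_prop⟩ : C(Icc (0:ℝ) 1, V)) ∈ Γ := by simp [Γ, t₀, t₁]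
  have hc' : IsGLB (maxAlong E '' Γ) c := by
    have hset : maxAlong E '' Γ = {b | ∃ l : C(Icc (0:ℝ) 1, V), l t₀ = 0 ∧ l t₁ = u₁ ∧
        b = ⨆ t : Icc (0:ℝ) 1, E (l t)} := by
      ext b; simp [Γ, maxAlong, eq_comm, and_assoc]
    rw [hc, ← hset]
    exact isGLB_csInf ⟨_, _, hline, rfl⟩ ⟨α, forall_mem_image.mpr hcross⟩
  have hαc : α ≤ c := hc'.2 (forall_mem_image.mpr hcross)
  have hAc : ∀ γ ∈ Γ, ∀ a ∈ ({t₀, t₁} : Set _), E (γ a) < c := by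
    rintro γ ⟨hγ₀, hγ₁⟩ a (rfl | rfl) <;> simp only [hγ₀, hγ₁] <;> linarith
  exact ⟨hαc, PalaisSmale.exists_eq_fderiv_eq_zero hPS hE fun ε hε =>
    exists_dist_le_norm_fderiv_le_of_isGLB_maxAlong hE hΓ (toFinite _).isClosed hΓA hc' hAc hε⟩
end

section
/- Let K ⊂ ℝⁿ be a compact set, let f be a continuous real-valued function on K × ℝ, and define F(x,u) = ∫₀ᵘ f(x,v) dv. Assume there exist q > 2 and R₀ > 0 such that 0 < qF(x,u) ≤ u f(x,u) for all x ∈ K and all |u| ≥ R₀. Then there exist constants a₁, a₂, a₃ > 0 such that (1/q)(u f(x,u) + a₁) ≥ F(x,u) + a₂ ≥ a₃ |u|^q for all u ∈ ℝ and all x ∈ K. -/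
open intervalIntegral Set Function
open scoped Interval

/-!
For `u ≥ R₀` the Ambrosetti–Rabinowitz inequality `q F ≤ u ∂ᵤF` says that `F(x, u) / u ^ q` is
nondecreasing, so `F(x, u) ≥ F(x, R₀) (u / R₀) ^ q`, and symmetrically for `u ≤ -R₀`. The values
`F(x, ±R₀) > 0` depend continuously on `x`, so they have a positive lower bound on the compact `K`.
On the bounded region `|u| ≤ R₀` both `F` and `u f` are uniformly bounded, and this is absorbed
into the constants `a₁`, `a₂`.
-/

lemma div_rpow_mul_rpow_le_of_hasDerivAt {G g : ℝ → ℝ} {q R : ℝ} (hR : 0 < R)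
    (hG : ∀ t, R ≤ t → HasDerivAt G (g t) t) (hAR : ∀ t, R ≤ t → q * G t ≤ t * g t)
    {t : ℝ} (ht : R ≤ t) : G R / R ^ q * t ^ q ≤ G t := by
  have hpos : ∀ s, R ≤ s → 0 < s := fun s hs => hR.trans_le hs
  have hquot : ∀ s, R ≤ s → HasDerivAt (fun s => G s / s ^ q)
      ((g s * s ^ q - G s * (q * s ^ (q - 1))) / (s ^ q) ^ 2) s := fun s hs =>
    (hG s hs).div (Real.hasDerivAt_rpow_const (Or.inl (hpos s hs).ne'))
      (Real.rpow_pos_of_pos (hpos s hs) q).ne'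
  have hmono : MonotoneOn (fun s => G s / s ^ q) (Ici R) := by
    refine monotoneOn_of_hasDerivWithinAt_nonneg (convex_Ici R)
      (fun s hs => (hquot s hs).continuousAt.continuousWithinAt)
      (fun s hs => (hquot s (interior_subset hs)).hasDerivWithinAt) fun s hs => ?_
    rw [interior_Ici] at hs
    have hs0 := hpos s hs.le
    have hnum : g s * s ^ q - G s * (q * s ^ (q - 1)) = s ^ (q - 1) * (s * g s - q * G s) := by
      rw [Real.rpow_sub_one hs0.ne']
      field_simp
    rw [hnum]
    exact div_nonneg (mul_nonneg (by positivity) (by linarith [hAR s hs.le])) (sq_nonneg _)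
  have htq := Real.rpow_pos_of_pos (hpos t ht) q
  calc G R / R ^ q * t ^ q ≤ G t / t ^ q * t ^ q :=
        mul_le_mul_of_nonneg_right (hmono self_mem_Ici ht ht) htq.le
    _ = G t := div_mul_cancel₀ _ htq.ne'

lemma div_rpow_mul_abs_rpow_le_of_hasDerivAt {G g : ℝ → ℝ} {q R m : ℝ} (hR : 0 < R)
    (hG : ∀ t, HasDerivAt G (g t) t) (hAR : ∀ t, R ≤ |t| → q * G t ≤ t * g t)
    (hm : m ≤ G R) (hm' : m ≤ G (-R)) {t : ℝ} (ht : R ≤ |t|) :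
    m / R ^ q * |t| ^ q ≤ G t := by
  rcases le_total 0 t with h0 | h0
  · rw [abs_of_nonneg h0] at ht ⊢
    calc m / R ^ q * t ^ q ≤ G R / R ^ q * t ^ q := by gcongr
      _ ≤ G t := div_rpow_mul_rpow_le_of_hasDerivAt hR (fun s _ => hG s)
          (fun s hs => hAR s (hs.trans (le_abs_self s))) ht
  · rw [abs_of_nonpos h0] at ht ⊢
    have hGneg : ∀ s, R ≤ s → HasDerivAt (fun s => G (-s)) (-g (-s)) s := fun s _ => by
      simpa [comp_def] using (hG (-s)).comp s (hasDerivAt_neg s)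
    have hARneg : ∀ s, R ≤ s → q * G (-s) ≤ s * -g (-s) := fun s hs => by
      simpa using hAR (-s) (by rwa [abs_neg, abs_of_pos (hR.trans_le hs)])
    calc m / R ^ q * (-t) ^ q ≤ G (-R) / R ^ q * (-t) ^ q :=
          mul_le_mul_of_nonneg_right (by gcongr) (Real.rpow_nonneg (by linarith) q)
      _ ≤ G (-(-t)) := div_rpow_mul_rpow_le_of_hasDerivAt hR hGneg hARneg ht
      _ = G t := by rw [neg_neg]

section CompactParameter

variable {X : Type*} [TopologicalSpace X] [CompactSpace X] {f F : X → ℝ → ℝ}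

lemma exists_bound_of_abs_le (hf : Continuous (uncurry f))
    (hF : ∀ x u, F x u = ∫ v in (0:ℝ)..u, f x v) {R : ℝ} (hR : 0 ≤ R) :
    ∃ M, 0 ≤ M ∧ ∀ x u, |u| ≤ R → |u * f x u| ≤ M ∧ |F x u| ≤ M := by
  have hbox : IsCompact (univ ×ˢ Icc (-R) R : Set (X × ℝ)) := isCompact_univ.prod isCompact_Icc
  obtain ⟨C, hC⟩ := hbox.exists_bound_of_continuousOn hf.continuousOn
  have hfC : ∀ x u, |u| ≤ R → |f x u| ≤ max C 0 := fun x u hu =>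
    (hC (x, u) ⟨mem_univ x, abs_le.mp hu⟩).trans (le_max_left C 0)
  refine ⟨R * max C 0, by positivity, fun x u hu => ⟨?_, ?_⟩⟩
  · rw [abs_mul]
    exact mul_le_mul hu (hfC x u hu) (abs_nonneg _) hR
  · have hI : ∀ v ∈ Ι 0 u, ‖f x v‖ ≤ max C 0 := fun v hv => hfC x v <| by
      simpa using (abs_sub_left_of_mem_uIcc (uIoc_subset_uIcc hv)).trans (by rwa [sub_zero])
    calc |F x u| ≤ max C 0 * |u - 0| := by rw [hF]; exact norm_integral_le_of_norm_le_const hI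
      _ ≤ R * max C 0 := by rw [sub_zero, mul_comm]; gcongr

lemma exists_pos_mul_rpow_le (hf : Continuous (uncurry f))
    (hF : ∀ x u, F x u = ∫ v in (0:ℝ)..u, f x v) {q R : ℝ} (hq : 0 < q) (hR : 0 < R)
    (hAR : ∀ x u, R ≤ |u| → 0 < q * F x u ∧ q * F x u ≤ u * f x u) :
    ∃ a > 0, ∀ x u, R ≤ |u| → a * |u| ^ q ≤ F x u := by
  have hderiv : ∀ x t, HasDerivAt (F x) (f x t) t := fun x t => by
    rw [show F x = fun u => ∫ v in (0:ℝ)..u, f x v from funext (hF x)]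
    exact ((hf.uncurry_left x).integral_hasStrictDerivAt 0 t).hasDerivAt
  have hcont : Continuous fun x => min (F x R) (F x (-R)) := by
    simp only [hF]
    exact (continuous_parametric_intervalIntegral_of_continuous' hf 0 R).min
      (continuous_parametric_intervalIntegral_of_continuous' hf 0 (-R))
  have hpos : ∀ x, 0 < min (F x R) (F x (-R)) := fun x =>
    lt_min (pos_of_mul_pos_right (hAR x R (by rw [abs_of_pos hR])).1 hq.le)
      (pos_of_mul_pos_right (hAR x (-R) (by rw [abs_neg, abs_of_pos hR])).1 hq.le)
  obtain ⟨m, hm, hmF⟩ := isCompact_univ.exists_forall_le' hcont.continuousOn fun x _ => hpos x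
  exact ⟨m / R ^ q, by positivity, fun x u hu => div_rpow_mul_abs_rpow_le_of_hasDerivAt hR
    (hderiv x) (fun t ht => (hAR x t ht).2) ((hmF x trivial).trans (min_le_left _ _))
    ((hmF x trivial).trans (min_le_right _ _)) hu⟩

theorem exists_ambrosettiRabinowitz_bounds (hf : Continuous (uncurry f))
    (hF : ∀ x u, F x u = ∫ v in (0:ℝ)..u, f x v) {q R : ℝ} (hq : 0 < q) (hR : 0 < R)
    (hAR : ∀ x u, R ≤ |u| → 0 < q * F x u ∧ q * F x u ≤ u * f x u) :
    ∃ a₁ > (0:ℝ), ∃ a₂ > (0:ℝ), ∃ a₃ > (0:ℝ), ∀ x u,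
      F x u + a₂ ≤ (1 / q) * (u * f x u + a₁) ∧ a₃ * |u| ^ q ≤ F x u + a₂ := by
  obtain ⟨M, hM, hsmall⟩ := exists_bound_of_abs_le hf hF hR.le
  obtain ⟨a, ha, hlarge⟩ := exists_pos_mul_rpow_le hf hF hq hR hAR
  refine ⟨q * (M + a * R ^ q) + (q + 1) * M, by positivity, M + a * R ^ q, by positivity, a, ha,
    fun x u => ?_⟩
  have hqM : 0 ≤ q * M := by positivity
  have haR : 0 ≤ a * R ^ q := by positivity
  rw [one_div, ← div_eq_inv_mul, le_div_iff₀ hq]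
  rcases le_or_gt R |u| with hu | hu
  · have hAR' := (hAR x u hu).2
    have hlarge' := hlarge x u hu
    constructor <;> linarith
  · obtain ⟨hfu, hFu⟩ := hsmall x u hu.le
    have hqF : q * F x u ≤ q * M := by gcongr; exact (abs_le.mp hFu).2
    have hrpow : a * |u| ^ q ≤ a * R ^ q := by gcongr
    constructor <;> linarith [abs_le.mp hfu, abs_le.mp hFu]

end CompactParameter

/-- Estimates (4.6)–(4.7) of the paper: under the Ambrosetti–Rabinowitz condition
`0 < qF(x,u) ≤ u f(x,u)` for `|u| ≥ R₀` (with `q > 2`, `R₀ > 0`), there are constants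
`a₁, a₂, a₃ > 0` such that `(1/q)(u f(x,u) + a₁) ≥ F(x,u) + a₂ ≥ a₃ |u|^q` for all
`u ∈ ℝ` and `x ∈ K`. -/
theorem stmt_9 {n : ℕ} (K : Set (EuclideanSpace ℝ (Fin n))) (hK : IsCompact K)
    (f : EuclideanSpace ℝ (Fin n) → ℝ → ℝ)
    (hf : ContinuousOn (fun z : EuclideanSpace ℝ (Fin n) × ℝ => f z.1 z.2)
      (K ×ˢ Set.univ))
    (F : EuclideanSpace ℝ (Fin n) → ℝ → ℝ)
    (hF : ∀ x u, F x u = ∫ v in (0:ℝ)..u, f x v)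
    (q R₀ : ℝ) (hq : 2 < q) (hR₀ : 0 < R₀)
    (hAR : ∀ x ∈ K, ∀ u : ℝ, R₀ ≤ |u| →
      0 < q * F x u ∧ q * F x u ≤ u * f x u) :
    ∃ a₁ > (0:ℝ), ∃ a₂ > (0:ℝ), ∃ a₃ > (0:ℝ), ∀ x ∈ K, ∀ u : ℝ,
      F x u + a₂ ≤ (1 / q) * (u * f x u + a₁) ∧
      a₃ * |u| ^ q ≤ F x u + a₂ := by
  have : CompactSpace K := isCompact_iff_compactSpace.mp hK
  have hfK : Continuous (uncurry fun x : K => f x) :=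
    hf.comp_continuous (continuous_subtype_val.prodMap continuous_id)
      fun z => ⟨z.1.2, mem_univ _⟩
  obtain ⟨a₁, h₁, a₂, h₂, a₃, h₃, h⟩ := exists_ambrosettiRabinowitz_bounds hfK
    (fun x u => hF x u) (by linarith) hR₀ fun x u hu => hAR x x.2 u hu
  exact ⟨a₁, h₁, a₂, h₂, a₃, h₃, fun x hx u => h ⟨x, hx⟩ u⟩
end

section
/- Let q > 1, B₁ > 0, C₂ > 0, and let α be a real number with α > q/(q-1). Then there is no sequence of real numbers (b_k)_{k ∈ ℕ} and index k₀ ∈ ℕ such that for all k ≥ k₀ both b_k ≥ C₂ · k^{α} and b_{k+1} ≤ b_k + B₁( b_k^{1/q} + 1 ) hold. -/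
/-!
Let `β = q / (q - 1)` be the Hölder conjugate of `q`, so that `β / q = β - 1`. If `b k ≤ M k^β`,
then `b k^{1/q} ≤ M^{1/q} k^{β-1}`, and for `M` large the recursion gives
`b (k+1) ≤ M (k^β + β k^{β-1}) ≤ M (k+1)^β` by Bernoulli's inequality. Hence every such sequence
is `O(k^β)`, which is incompatible with the lower bound `C₂ k^α` when `α > β`.
-/

open Real Filter

theorem rpow_add_mul_rpow_sub_one_le_add_one_rpow {x β : ℝ} (hx : 0 < x) (hβ : 1 ≤ β) :
    x ^ β + β * x ^ (β - 1) ≤ (x + 1) ^ β := by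
  have hbern : 1 + β * x⁻¹ ≤ (1 + x⁻¹) ^ β :=
    one_add_mul_self_le_rpow_one_add (by linarith [inv_pos.2 hx]) hβ
  calc x ^ β + β * x ^ (β - 1) = x ^ β * (1 + β * x⁻¹) := by
        rw [rpow_sub hx, rpow_one]; field_simp
    _ ≤ x ^ β * (1 + x⁻¹) ^ β := by gcongr
    _ = (x + 1) ^ β := by
        rw [← mul_rpow hx.le (by positivity)]; congr 1; field_simp

section HolderConjugate

variable {q β B : ℝ}

theorem eventually_mul_rpow_add_one_le (hqβ : q.HolderConjugate β) (hB : 0 ≤ B) :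
    ∀ᶠ M in atTop, B * (M ^ (1 / q) + 1) ≤ β * M := by
  filter_upwards [eventually_ge_atTop 1,
    (tendsto_rpow_atTop hqβ.symm.one_div_pos).eventually_ge_atTop (2 * B / β)] with M hM1 hMβ
  have hsplit : M ^ (1 / q) * M ^ (1 / β) = M := by
    rw [← rpow_add (by linarith), one_div, one_div, hqβ.inv_add_inv_eq_one, rpow_one]
  have hMq : 1 ≤ M ^ (1 / q) := one_le_rpow hM1 hqβ.one_div_nonneg
  have hβ : 0 < β := hqβ.symm.pos
  calc B * (M ^ (1 / q) + 1) ≤ β * (2 * B / β) * M ^ (1 / q) := by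
        rw [mul_div_cancel₀ _ hβ.ne']; nlinarith
    _ ≤ β * M ^ (1 / β) * M ^ (1 / q) := by gcongr
    _ = β * M := by rw [mul_assoc, mul_comm (M ^ (1 / β)), hsplit]

theorem add_mul_rpow_add_one_le_of_le_mul_rpow (hqβ : q.HolderConjugate β) (hB : 0 ≤ B)
    {M x y : ℝ} (hM : B * (M ^ (1 / q) + 1) ≤ β * M) (hM0 : 0 ≤ M) (hx : 1 ≤ x) (hy0 : 0 ≤ y)
    (hy : y ≤ M * x ^ β) :
    y + B * (y ^ (1 / q) + 1) ≤ M * (x + 1) ^ β := by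
  have hx0 : 0 < x := by linarith
  have hyq : y ^ (1 / q) ≤ M ^ (1 / q) * x ^ (β - 1) :=
    calc y ^ (1 / q) ≤ (M * x ^ β) ^ (1 / q) := rpow_le_rpow hy0 hy hqβ.one_div_nonneg
      _ = M ^ (1 / q) * x ^ (β - 1) := by
          rw [mul_rpow hM0 (by positivity), ← rpow_mul hx0.le, mul_one_div,
            hqβ.symm.div_conj_eq_sub_one]
  have hxβ : 1 ≤ x ^ (β - 1) := one_le_rpow hx (by linarith [hqβ.symm.lt])
  calc y + B * (y ^ (1 / q) + 1) ≤ M * x ^ β + B * (M ^ (1 / q) + 1) * x ^ (β - 1) := by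
        nlinarith
    _ ≤ M * x ^ β + β * M * x ^ (β - 1) := by gcongr
    _ = M * (x ^ β + β * x ^ (β - 1)) := by ring
    _ ≤ M * (x + 1) ^ β := by
        gcongr; exact rpow_add_mul_rpow_sub_one_le_add_one_rpow hx0 hqβ.symm.lt.le

theorem exists_eventually_le_mul_rpow_of_le_add (hqβ : q.HolderConjugate β) (hB : 0 ≤ B)
    {b : ℕ → ℝ} (hb : ∀ᶠ k in atTop, 0 ≤ b k ∧ b (k + 1) ≤ b k + B * (b k ^ (1 / q) + 1)) :
    ∃ M, ∀ᶠ k in atTop, b k ≤ M * (k : ℝ) ^ β := by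
  obtain ⟨k₀, hk₀⟩ := eventually_atTop.1 (hb.and (eventually_ge_atTop 1))
  have hk₀pos : (0 : ℝ) < (k₀ : ℝ) ^ β := by
    have : (1 : ℝ) ≤ k₀ := by exact_mod_cast (hk₀ k₀ le_rfl).2
    positivity
  obtain ⟨M, hM, hMb, hM0⟩ := ((eventually_mul_rpow_add_one_le hqβ hB).and
    ((eventually_ge_atTop (b k₀ / (k₀ : ℝ) ^ β)).and (eventually_ge_atTop 0))).exists
  refine ⟨M, eventually_atTop.2 ⟨k₀, fun k hk => ?_⟩⟩
  induction k, hk using Nat.le_induction with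
  | base => rwa [div_le_iff₀ hk₀pos] at hMb
  | succ k hk ih =>
    obtain ⟨⟨hbk, hrec⟩, hk1⟩ := hk₀ k hk
    push_cast
    exact hrec.trans (add_mul_rpow_add_one_le_of_le_mul_rpow hqβ hB hM hM0
      (by exact_mod_cast hk1) hbk ih)

end HolderConjugate

theorem eventually_mul_rpow_lt_mul_rpow {α β C : ℝ} (hβα : β < α) (M : ℝ) (hC : 0 < C) :
    ∀ᶠ k : ℕ in atTop, M * (k : ℝ) ^ β < C * (k : ℝ) ^ α := by
  filter_upwards [eventually_gt_atTop 0, ((tendsto_rpow_atTop (sub_pos.2 hβα)).comp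
    tendsto_natCast_atTop_atTop).eventually_gt_atTop (M / C)] with k hk hkM
  have hk' : (0 : ℝ) < k := by exact_mod_cast hk
  calc M * (k : ℝ) ^ β = C * (M / C) * (k : ℝ) ^ β := by field_simp
    _ < C * (k : ℝ) ^ (α - β) * (k : ℝ) ^ β := by gcongr; exact hkM
    _ = C * (k : ℝ) ^ α := by rw [mul_assoc, ← rpow_add hk', sub_add_cancel]

/-- Core of Proposition 4.6 of the paper: a sequence growing at least like
`C₂ k^α` with `α > q/(q-1)` cannot satisfy the recursive bound
`b_{k+1} ≤ b_k + B₁(b_k^{1/q} + 1)` from some index on. -/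
theorem stmt_11 (q B₁ C₂ α : ℝ) (hq : 1 < q) (hB₁ : 0 < B₁) (hC₂ : 0 < C₂)
    (hα : q / (q - 1) < α) :
    ¬ ∃ (b : ℕ → ℝ) (k₀ : ℕ), ∀ k, k₀ ≤ k →
      C₂ * (k : ℝ) ^ α ≤ b k ∧ b (k + 1) ≤ b k + B₁ * (b k ^ (1 / q) + 1) := by
  rintro ⟨b, k₀, h⟩
  have hb : ∀ᶠ k : ℕ in atTop,
      C₂ * (k : ℝ) ^ α ≤ b k ∧ b (k + 1) ≤ b k + B₁ * (b k ^ (1 / q) + 1) :=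
    eventually_atTop.2 ⟨k₀, h⟩
  have hqβ : q.HolderConjugate (q / (q - 1)) := .conjExponent hq
  obtain ⟨M, hM⟩ := exists_eventually_le_mul_rpow_of_le_add hqβ hB₁.le
    (hb.mono fun k hk => ⟨(by positivity : (0 : ℝ) ≤ C₂ * (k : ℝ) ^ α).trans hk.1, hk.2⟩)
  obtain ⟨k, ⟨hlow, -⟩, hup, hlt⟩ :=
    (hb.and (hM.and (eventually_mul_rpow_lt_mul_rpow hα M hC₂))).exists
  linarith
end
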